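/- arXiv:2110.10782 — 2 statements merged into one kernel-verified Lean document; each statement's English description precedes it below -/
import Mathlib

section
/- Let a ∈ ℝ, δ > 0, and let g₀ : [a-δ, a+δ] → ℝ be a C² function with g₀(r) > 0 for r ≠ a, g₀(a) = g₀'(a) = 0, and g₀''(a) > 0. Set g_ε = g₀ + ε. If τ : (0, ε₀) → [0, δ] satisfies τ(ε)/√ε → ∞ as ε → 0⁺, then √ε · ∫_{a-τ(ε)}^{a+τ(ε)} dr / g_ε(r) → π / √(g₀''(a)/2) as ε → 0⁺. -/
/-! By Taylor's theorem `g₀ r = c (r - a)² + o((r - a)²)` with `c = g₀''(a) / 2`, so for every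
`k > c` (resp. `0 < k < c`) the function `g₀` lies below (resp. above) `k (r - a)²` near `a`.
Away from that neighbourhood both `1 / (g₀ r + ε)` and `1 / (k (r - a)² + ε)` are bounded
uniformly in `ε`, so on `[a - τ, a + τ] ⊆ [a - δ, a + δ]` the integral of `1 / (g₀ + ε)` is
bounded by the Lorentzian integral `(2 / √(k ε)) arctan (τ √(k / ε))` up to an error `O(1)`.
After multiplying by `√ε`, the error vanishes and, as `τ / √ε → ∞`, the Lorentzian term tends
to `π / √k`. Letting `k → c` from either side squeezes the limit to `π / √c`. -/

open MeasureTheory Filter Topology Set Real Asymptotics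

theorem ContDiffAt.isLittleO_sub_taylor_two {f : ℝ → ℝ} {a : ℝ} (hf : ContDiffAt ℝ 2 f a) :
    (fun x ↦ f x - (f a + deriv f a * (x - a) + deriv (deriv f) a / 2 * (x - a) ^ 2))
      =o[𝓝 a] fun x ↦ (x - a) ^ 2 := by
  obtain ⟨r, hr, hball⟩ := Metric.mem_nhds_iff.1 (hf.eventually (by simp))
  have hopen : IsOpen (Metric.ball a r) := Metric.isOpen_ball
  have ha : a ∈ Metric.ball a r := Metric.mem_ball_self hr
  have htaylor := taylor_isLittleO (n := 2) (convex_ball a r) ha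
    fun y hy ↦ ContDiffAt.contDiffWithinAt (hball hy)
  rw [nhdsWithin_eq_nhds.2 (hopen.mem_nhds ha)] at htaylor
  refine htaylor.congr_left fun x ↦ ?_
  rw [taylor_within_apply]
  simp only [Finset.sum_range_succ, Finset.sum_range_zero, iteratedDerivWithin_of_isOpen hopen ha,
    iteratedDeriv_zero, iteratedDeriv_succ, smul_eq_mul]
  norm_num [Nat.factorial]
  ring

theorem eventually_le_mul_sq_of_isLittleO {f : ℝ → ℝ} {a c k : ℝ}
    (hf : (fun r ↦ f r - c * (r - a) ^ 2) =o[𝓝 a] fun r ↦ (r - a) ^ 2) (hck : c < k) :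
    ∀ᶠ r in 𝓝 a, f r ≤ k * (r - a) ^ 2 := by
  filter_upwards [hf.bound (sub_pos.2 hck)] with r hr
  rw [Real.norm_eq_abs, Real.norm_of_nonneg (sq_nonneg _)] at hr
  linarith [le_abs_self (f r - c * (r - a) ^ 2)]

theorem eventually_mul_sq_le_of_isLittleO {f : ℝ → ℝ} {a c k : ℝ}
    (hf : (fun r ↦ f r - c * (r - a) ^ 2) =o[𝓝 a] fun r ↦ (r - a) ^ 2) (hkc : k < c) :
    ∀ᶠ r in 𝓝 a, k * (r - a) ^ 2 ≤ f r := by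
  filter_upwards [hf.bound (sub_pos.2 hkc)] with r hr
  rw [Real.norm_eq_abs, Real.norm_of_nonneg (sq_nonneg _)] at hr
  linarith [neg_abs_le (f r - c * (r - a) ^ 2)]

theorem continuous_one_div_mul_sq_add {k ε : ℝ} (hk : 0 ≤ k) (hε : 0 < ε) (a : ℝ) :
    Continuous fun r : ℝ ↦ 1 / (k * (r - a) ^ 2 + ε) :=
  continuous_const.div (by fun_prop) fun r ↦ by positivity

theorem integral_one_div_mul_sq_add {k ε : ℝ} (hk : 0 < k) (hε : 0 < ε) (a T : ℝ) :
    ∫ r in (a - T)..(a + T), 1 / (k * (r - a) ^ 2 + ε) =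
      2 / √(k * ε) * arctan (√(k / ε) * T) := by
  set s := √(k / ε)
  have hs : 0 < s := Real.sqrt_pos.2 (div_pos hk hε)
  have hs2 : s ^ 2 = k / ε := Real.sq_sqrt (div_pos hk hε).le
  have hkε : √(k * ε) = s * ε := by
    rw [show k * ε = k / ε * ε ^ 2 by field_simp, Real.sqrt_mul (div_pos hk hε).le,
      Real.sqrt_sq hε.le]
  have hderiv (x : ℝ) : HasDerivAt (fun x ↦ arctan (s * (x - a)) / (s * ε))
      (1 / (k * (x - a) ^ 2 + ε)) x := by
    refine ((((hasDerivAt_id x).sub_const a).const_mul s).arctan.div_const (s * ε)).congr_deriv ?_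
    rw [id, mul_pow, hs2]
    field_simp
    ring
  rw [intervalIntegral.integral_eq_sub_of_hasDerivAt (fun x _ ↦ hderiv x)
    ((continuous_one_div_mul_sq_add hk.le hε a).intervalIntegrable _ _), hkε]
  simp only [add_sub_cancel_left, sub_sub_cancel_left, mul_neg, arctan_neg]
  ring

theorem tendsto_sqrt_mul_integral_one_div_mul_sq_add {k : ℝ} (hk : 0 < k) (a : ℝ) {T : ℝ → ℝ}
    (hT : Tendsto (fun ε ↦ T ε / √ε) (𝓝[>] 0) atTop) :
    Tendsto (fun ε ↦ √ε * ∫ r in (a - T ε)..(a + T ε), 1 / (k * (r - a) ^ 2 + ε))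
      (𝓝[>] 0) (𝓝 (π / √k)) := by
  have hsk : 0 < √k := Real.sqrt_pos.2 hk
  have harctan : Tendsto (fun ε ↦ 2 / √k * arctan (√k * (T ε / √ε))) (𝓝[>] 0)
      (𝓝 (2 / √k * (π / 2))) :=
    ((tendsto_arctan_atTop.mono_right nhdsWithin_le_nhds).comp
      (hT.const_mul_atTop hsk)).const_mul _
  rw [show 2 / √k * (π / 2) = π / √k by ring] at harctan
  refine harctan.congr' ?_
  filter_upwards [self_mem_nhdsWithin] with ε (hε : 0 < ε)
  have hsε : 0 < √ε := Real.sqrt_pos.2 hε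
  rw [integral_one_div_mul_sq_add hk hε, Real.sqrt_mul hk.le, Real.sqrt_div hk.le]
  field_simp

theorem tendsto_sqrt_nhdsGT_zero : Tendsto (fun ε : ℝ ↦ √ε) (𝓝[>] 0) (𝓝 0) := by
  simpa using (continuous_sqrt.tendsto 0).mono_left nhdsWithin_le_nhds

theorem exists_one_div_mul_sq_add_sub_le {f : ℝ → ℝ} {a k : ℝ} (hk : 0 < k)
    (hf : ∀ᶠ r in 𝓝 a, f r ≤ k * (r - a) ^ 2) :
    ∃ B, 0 ≤ B ∧ ∀ r ε, 0 ≤ f r → 0 < ε → 1 / (k * (r - a) ^ 2 + ε) - B ≤ 1 / (f r + ε) := by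
  obtain ⟨ρ, hρ, hball⟩ := Metric.mem_nhds_iff.1 hf
  refine ⟨1 / (k * ρ ^ 2), by positivity, fun r ε hfr hε ↦ ?_⟩
  by_cases hr : r ∈ Metric.ball a ρ
  · have hfk : f r ≤ k * (r - a) ^ 2 := hball hr
    have : 1 / (k * (r - a) ^ 2 + ε) ≤ 1 / (f r + ε) :=
      one_div_le_one_div_of_le (by positivity) (by linarith)
    linarith [show 0 ≤ 1 / (k * ρ ^ 2) by positivity]
  · have hρr : ρ ^ 2 ≤ (r - a) ^ 2 := by
      rw [Metric.mem_ball, Real.dist_eq, not_lt] at hr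
      nlinarith [sq_abs (r - a)]
    have : 1 / (k * (r - a) ^ 2 + ε) ≤ 1 / (k * ρ ^ 2) :=
      one_div_le_one_div_of_le (by positivity) (by nlinarith)
    linarith [show 0 ≤ 1 / (f r + ε) by positivity]

theorem exists_one_div_add_le_one_div_mul_sq_add_add {f : ℝ → ℝ} {s : Set ℝ} {a k : ℝ}
    (hs : IsCompact s) (hfc : ContinuousOn f s) (hpos : ∀ r ∈ s, r ≠ a → 0 < f r) (hk : 0 ≤ k)
    (hf : ∀ᶠ r in 𝓝 a, k * (r - a) ^ 2 ≤ f r) :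
    ∃ B, 0 ≤ B ∧ ∀ r ∈ s, ∀ ε, 0 < ε → 1 / (f r + ε) ≤ 1 / (k * (r - a) ^ 2 + ε) + B := by
  obtain ⟨ρ, hρ, hball⟩ := Metric.mem_nhds_iff.1 hf
  obtain ⟨m, hm, hmf⟩ := (hs.diff (Metric.isOpen_ball (x := a) (ε := ρ))).exists_forall_le'
    (hfc.mono sdiff_subset) fun r hr ↦ hpos r hr.1 fun hra ↦ hr.2 (by simpa [hra] using hρ)
  refine ⟨1 / m, by positivity, fun r hrs ε hε ↦ ?_⟩
  by_cases hr : r ∈ Metric.ball a ρ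
  · have hkf : k * (r - a) ^ 2 ≤ f r := hball hr
    have : 1 / (f r + ε) ≤ 1 / (k * (r - a) ^ 2 + ε) :=
      one_div_le_one_div_of_le (by positivity) (by linarith)
    linarith [show 0 ≤ 1 / m by positivity]
  · have : 1 / (f r + ε) ≤ 1 / m :=
      one_div_le_one_div_of_le hm (by linarith [hmf r ⟨hrs, hr⟩])
    linarith [show 0 ≤ 1 / (k * (r - a) ^ 2 + ε) by positivity]

theorem intervalIntegrable_one_div_add {f : ℝ → ℝ} {s : Set ℝ} {x y ε : ℝ}
    (hfc : ContinuousOn f s) (hf0 : ∀ r ∈ s, 0 ≤ f r) (hε : 0 < ε) (hxy : uIcc x y ⊆ s) :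
    IntervalIntegrable (fun r ↦ 1 / (f r + ε)) volume x y :=
  ((continuousOn_const.div (hfc.add continuousOn_const) fun r hr ↦
    (add_pos_of_nonneg_of_pos (hf0 r hr) hε).ne').mono hxy).intervalIntegrable

theorem uIcc_sub_add_subset_Icc {t δ : ℝ} (a : ℝ) (ht : 0 ≤ t) (htδ : t ≤ δ) :
    uIcc (a - t) (a + t) ⊆ Icc (a - δ) (a + δ) := by
  rw [uIcc_of_le (by linarith)]
  exact Icc_subset_Icc (by linarith) (by linarith)

section Squeeze

variable {f τ : ℝ → ℝ} {a δ k b : ℝ}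

theorem eventually_lt_sqrt_mul_integral_one_div_add (hk : 0 < k) (hb : b < π / √k)
    (hfc : ContinuousOn f (Icc (a - δ) (a + δ))) (hf0 : ∀ r ∈ Icc (a - δ) (a + δ), 0 ≤ f r)
    (hfk : ∀ᶠ r in 𝓝 a, f r ≤ k * (r - a) ^ 2) (hτ : ∀ᶠ ε in 𝓝[>] 0, τ ε ∈ Icc 0 δ)
    (hτlim : Tendsto (fun ε ↦ τ ε / √ε) (𝓝[>] 0) atTop) :
    ∀ᶠ ε in 𝓝[>] 0, b < √ε * ∫ r in (a - τ ε)..(a + τ ε), 1 / (f r + ε) := by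
  obtain ⟨B, hB, hbound⟩ := exists_one_div_mul_sq_add_sub_le hk hfk
  have hlim := (tendsto_sqrt_mul_integral_one_div_mul_sq_add hk a hτlim).sub
    (tendsto_sqrt_nhdsGT_zero.mul_const (2 * δ * B))
  rw [zero_mul, sub_zero] at hlim
  filter_upwards [hlim.eventually (lt_mem_nhds hb), hτ, self_mem_nhdsWithin]
    with ε hbε ⟨hτ0, hτδ⟩ (hε : 0 < ε)
  refine hbε.trans_le ?_
  rw [← mul_sub]
  refine mul_le_mul_of_nonneg_left ?_ (sqrt_nonneg ε)
  have hsub := uIcc_sub_add_subset_Icc a hτ0 hτδ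
  have hmodel := continuous_one_div_mul_sq_add hk.le hε a
  calc (∫ r in (a - τ ε)..(a + τ ε), 1 / (k * (r - a) ^ 2 + ε)) - 2 * δ * B
      ≤ (∫ r in (a - τ ε)..(a + τ ε), 1 / (k * (r - a) ^ 2 + ε)) - (a + τ ε - (a - τ ε)) * B := by
        nlinarith
    _ = ∫ r in (a - τ ε)..(a + τ ε), (1 / (k * (r - a) ^ 2 + ε) - B) := by
        rw [intervalIntegral.integral_sub (hmodel.intervalIntegrable _ _) intervalIntegrable_const,
          intervalIntegral.integral_const, smul_eq_mul]
    _ ≤ ∫ r in (a - τ ε)..(a + τ ε), 1 / (f r + ε) :=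
        intervalIntegral.integral_mono_on (by linarith)
          ((hmodel.sub continuous_const).intervalIntegrable _ _)
          (intervalIntegrable_one_div_add hfc hf0 hε hsub) fun r hr ↦
            hbound r ε (hf0 r (hsub (Icc_subset_uIcc hr))) hε

theorem eventually_sqrt_mul_integral_one_div_add_lt (hk : 0 < k) (hb : π / √k < b)
    (hfc : ContinuousOn f (Icc (a - δ) (a + δ)))
    (hpos : ∀ r ∈ Icc (a - δ) (a + δ), r ≠ a → 0 < f r)
    (hkf : ∀ᶠ r in 𝓝 a, k * (r - a) ^ 2 ≤ f r) (hτ : ∀ᶠ ε in 𝓝[>] 0, τ ε ∈ Icc 0 δ)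
    (hτlim : Tendsto (fun ε ↦ τ ε / √ε) (𝓝[>] 0) atTop) :
    ∀ᶠ ε in 𝓝[>] 0, √ε * ∫ r in (a - τ ε)..(a + τ ε), 1 / (f r + ε) < b := by
  obtain ⟨B, hB, hbound⟩ :=
    exists_one_div_add_le_one_div_mul_sq_add_add isCompact_Icc hfc hpos hk.le hkf
  have hf0 : ∀ r ∈ Icc (a - δ) (a + δ), 0 ≤ f r := fun r hr ↦ by
    rcases eq_or_ne r a with rfl | hra
    · simpa using hkf.self_of_nhds
    · exact (hpos r hr hra).le
  have hlim := (tendsto_sqrt_mul_integral_one_div_mul_sq_add hk a hτlim).add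
    (tendsto_sqrt_nhdsGT_zero.mul_const (2 * δ * B))
  rw [zero_mul, add_zero] at hlim
  filter_upwards [hlim.eventually (gt_mem_nhds hb), hτ, self_mem_nhdsWithin]
    with ε hbε ⟨hτ0, hτδ⟩ (hε : 0 < ε)
  refine lt_of_le_of_lt ?_ hbε
  rw [← mul_add]
  refine mul_le_mul_of_nonneg_left ?_ (sqrt_nonneg ε)
  have hsub := uIcc_sub_add_subset_Icc a hτ0 hτδ
  have hmodel := continuous_one_div_mul_sq_add hk.le hε a
  calc ∫ r in (a - τ ε)..(a + τ ε), 1 / (f r + ε)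
      ≤ ∫ r in (a - τ ε)..(a + τ ε), (1 / (k * (r - a) ^ 2 + ε) + B) :=
        intervalIntegral.integral_mono_on (by linarith)
          (intervalIntegrable_one_div_add hfc hf0 hε hsub)
          ((hmodel.add continuous_const).intervalIntegrable _ _) fun r hr ↦
            hbound r (hsub (Icc_subset_uIcc hr)) ε hε
    _ = (∫ r in (a - τ ε)..(a + τ ε), 1 / (k * (r - a) ^ 2 + ε)) + (a + τ ε - (a - τ ε)) * B := by
        rw [intervalIntegral.integral_add (hmodel.intervalIntegrable _ _) intervalIntegrable_const,
          intervalIntegral.integral_const, smul_eq_mul]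
    _ ≤ (∫ r in (a - τ ε)..(a + τ ε), 1 / (k * (r - a) ^ 2 + ε)) + 2 * δ * B := by
        nlinarith

end Squeeze

theorem stmt_3 (a δ ε₀ : ℝ) (hδ : 0 < δ) (hε₀ : 0 < ε₀) (g₀ : ℝ → ℝ) (τ : ℝ → ℝ)
    (hg : ContDiffOn ℝ 2 g₀ (Set.Icc (a - δ) (a + δ)))
    (hpos : ∀ r ∈ Set.Icc (a - δ) (a + δ), r ≠ a → 0 < g₀ r)
    (h0 : g₀ a = 0) (h1 : deriv g₀ a = 0) (h2 : 0 < deriv (deriv g₀) a)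
    (hτ : ∀ ε ∈ Set.Ioo 0 ε₀, τ ε ∈ Set.Icc 0 δ)
    (hτlim : Tendsto (fun ε => τ ε / Real.sqrt ε) (𝓝[>] 0) atTop) :
    Tendsto (fun ε => Real.sqrt ε * ∫ r in (a - τ ε)..(a + τ ε), 1 / (g₀ r + ε))
      (𝓝[>] 0) (𝓝 (Real.pi / Real.sqrt (deriv (deriv g₀) a / 2))) := by
  set c := deriv (deriv g₀) a / 2
  have hc : 0 < c := half_pos h2
  have hmem : Icc (a - δ) (a + δ) ∈ 𝓝 a := Icc_mem_nhds (by linarith) (by linarith)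
  have htaylor : (fun r ↦ g₀ r - c * (r - a) ^ 2) =o[𝓝 a] fun r ↦ (r - a) ^ 2 := by
    simpa [h0, h1] using (hg.contDiffAt hmem).isLittleO_sub_taylor_two
  have hg0 : ∀ r ∈ Icc (a - δ) (a + δ), 0 ≤ g₀ r := fun r hr ↦ by
    rcases eq_or_ne r a with rfl | hra
    · exact h0.ge
    · exact (hpos r hr hra).le
  have hτ' : ∀ᶠ ε in 𝓝[>] 0, τ ε ∈ Icc 0 δ := eventually_of_mem (Ioo_mem_nhdsGT hε₀) hτ
  have hcont : ContinuousAt (fun k ↦ π / √k) c :=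
    continuousAt_const.div continuous_sqrt.continuousAt (sqrt_pos.2 hc).ne'
  refine tendsto_order.2 ⟨fun b hb ↦ ?_, fun b hb ↦ ?_⟩
  · obtain ⟨k, hbk, hck⟩ := ((hcont.eventually (lt_mem_nhds hb)).filter_mono nhdsWithin_le_nhds
      |>.and (self_mem_nhdsWithin : Ioi c ∈ 𝓝[>] c)).exists
    exact eventually_lt_sqrt_mul_integral_one_div_add (hc.trans hck) hbk hg.continuousOn hg0
      (eventually_le_mul_sq_of_isLittleO htaylor hck) hτ' hτlim
  · obtain ⟨k, ⟨hkb, hk⟩, hkc⟩ := (((hcont.eventually (gt_mem_nhds hb)).and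
      (eventually_gt_nhds hc)).filter_mono nhdsWithin_le_nhds
      |>.and (self_mem_nhdsWithin : Iio c ∈ 𝓝[<] c)).exists
    exact eventually_sqrt_mul_integral_one_div_add_lt hk hkb hg.continuousOn hpos
      (eventually_mul_sq_le_of_isLittleO htaylor hkc) hτ' hτlim
end

section
/- Under the hypotheses of the previous lemma (g₀ C² on [a-δ,a+δ], positive away from a, g₀(a)=g₀'(a)=0, g₀''(a)>0, g_ε = g₀ + ε), one has √ε · ∫_{a-δ}^{a+δ} dr / g_ε(r) → π / √(g₀''(a)/2) as ε → 0⁺. -/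
/-!
Substituting `r = a + √ε s` turns `√ε ∫ dr / (g₀ r + ε)` into the integral of
`ε / (g₀ (a + √ε s) + ε)` over `|s| ≤ δ / √ε`. Since `g₀ r ~ c (r - a)²` with `c = g₀''(a) / 2`,
the integrand tends to `1 / (c s² + 1)`, and a global bound `g₀ r ≥ k (r - a)²` dominates it
by `1 / (k s² + 1)`. Dominated convergence gives `∫ ds / (c s² + 1) = π / √c`.
-/

open MeasureTheory Filter Topology Set

theorem tendsto_div_sub_sq_of_deriv_eq_zero {g : ℝ → ℝ} {a L : ℝ}
    (hdiff : ∀ᶠ x in 𝓝 a, DifferentiableAt ℝ g x) (hL : HasDerivAt (deriv g) L a)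
    (h0 : g a = 0) (h1 : deriv g a = 0) :
    Tendsto (fun x => g x / (x - a) ^ 2) (𝓝[≠] a) (𝓝 (L / 2)) := by
  have hslope : Tendsto (fun x => deriv g x / (2 * (x - a))) (𝓝[≠] a) (𝓝 (L / 2)) := by
    refine ((hasDerivAt_iff_tendsto_slope.mp hL).div_const 2).congr fun x => ?_
    rw [slope_def_field, h1, sub_zero, div_div, mul_comm]
  refine HasDerivAt.lhopital_zero_nhdsNE (f' := deriv g) (g' := fun x => 2 * (x - a)) ?_
    (Eventually.of_forall fun x => ?_) ?_ ?_ ?_ hslope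
  · exact (hdiff.filter_mono nhdsWithin_le_nhds).mono fun x hx => hx.hasDerivAt
  · simpa using ((hasDerivAt_id x).sub_const a).fun_pow 2
  · filter_upwards [self_mem_nhdsWithin] with x hx
    exact mul_ne_zero two_ne_zero (sub_ne_zero.mpr hx)
  · simpa [h0] using hdiff.self_of_nhds.continuousAt.tendsto.mono_left nhdsWithin_le_nhds
  · have hsq : Continuous fun x : ℝ => (x - a) ^ 2 := by fun_prop
    simpa using (hsq.tendsto a).mono_left nhdsWithin_le_nhds

theorem exists_pos_mul_sub_sq_le {g : ℝ → ℝ} {a c : ℝ} {s : Set ℝ} (hs : IsCompact s)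
    (hg : ContinuousOn g s) (hpos : ∀ r ∈ s, r ≠ a → 0 < g r) (ha : 0 ≤ g a) (hc : 0 < c)
    (hA : Tendsto (fun x => g x / (x - a) ^ 2) (𝓝[≠] a) (𝓝 c)) :
    ∃ k > 0, ∀ r ∈ s, k * (r - a) ^ 2 ≤ g r := by
  classical
  -- `g / (· - a)²`, made continuous at `a`, is positive on the compact `s`, hence bounded below.
  set q := Function.update (fun x => g x / (x - a) ^ 2) a c
  have hq_pos : ∀ r ∈ s, 0 < q r := by
    intro r hr
    rcases eq_or_ne r a with rfl | hra
    · simpa [q] using hc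
    · simp only [q, Function.update_of_ne hra]
      positivity [hpos r hr hra, sub_ne_zero.mpr hra]
  have hq_cont : ContinuousOn q s := by
    intro x hx
    rcases eq_or_ne x a with rfl | hxa
    · exact (continuousAt_update_same.mpr hA).continuousWithinAt
    · have hquot : ContinuousWithinAt (fun x => g x / (x - a) ^ 2) s x :=
        (hg x hx).div (by fun_prop) (pow_ne_zero 2 (sub_ne_zero.mpr hxa))
      refine hquot.congr_of_eventuallyEq ?_ (Function.update_of_ne hxa ..)
      filter_upwards [nhdsWithin_le_nhds (isOpen_ne.mem_nhds hxa)] with y hy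
      exact Function.update_of_ne hy ..
  obtain ⟨k, hk, hkq⟩ := hs.exists_forall_le' hq_cont hq_pos
  refine ⟨k, hk, fun r hr => ?_⟩
  rcases eq_or_ne r a with rfl | hra
  · simpa using ha
  · have hkr := hkq r hr
    simp only [q, Function.update_of_ne hra] at hkr
    rwa [le_div_iff₀ (by positivity [sub_ne_zero.mpr hra])] at hkr

theorem tendsto_div_apply_sqrt_mul_add {g : ℝ → ℝ} {a c s : ℝ} (hc : 0 < c)
    (hA : Tendsto (fun x => g x / (x - a) ^ 2) (𝓝[≠] a) (𝓝 c)) (hs : s ≠ 0) :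
    Tendsto (fun ε => ε / (g (√ε * s + a) + ε)) (𝓝[>] 0) (𝓝 (1 / (c * s ^ 2 + 1))) := by
  have hmap : Tendsto (fun ε => √ε * s + a) (𝓝[>] 0) (𝓝[≠] a) := by
    refine tendsto_nhdsWithin_iff.mpr ⟨?_, ?_⟩
    · have : Tendsto (fun ε => √ε * s + a) (𝓝 0) (𝓝 (√0 * s + a)) :=
        ((Real.continuous_sqrt.tendsto 0).mul_const s).add_const a
      simpa using this.mono_left nhdsWithin_le_nhds
    · filter_upwards [self_mem_nhdsWithin] with ε (hε : 0 < ε)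
      simpa using And.intro (Real.sqrt_pos.mpr hε).ne' hs
  have hlim := (((hA.comp hmap).mul_const (s ^ 2)).add_const 1).inv₀ (by positivity)
  rw [one_div]
  refine hlim.congr' ?_
  filter_upwards [self_mem_nhdsWithin] with ε (hε : 0 < ε)
  have hsq : (√ε * s + a - a) ^ 2 = ε * s ^ 2 := by
    rw [add_sub_cancel_right, mul_pow, Real.sq_sqrt hε.le]
  simp only [Function.comp_apply, hsq]
  field_simp

theorem one_div_mul_sq_add_one_eq {c : ℝ} (hc : 0 ≤ c) :
    (fun s : ℝ => 1 / (c * s ^ 2 + 1)) = fun s => (1 + (√c * s) ^ 2)⁻¹ := by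
  funext s
  rw [mul_pow, Real.sq_sqrt hc, one_div, add_comm]

theorem integrable_one_div_mul_sq_add_one {c : ℝ} (hc : 0 < c) :
    Integrable fun s : ℝ => 1 / (c * s ^ 2 + 1) := by
  rw [one_div_mul_sq_add_one_eq hc.le]
  exact integrable_inv_one_add_sq.comp_mul_left' (Real.sqrt_pos.mpr hc).ne'

theorem integral_one_div_mul_sq_add_one {c : ℝ} (hc : 0 < c) :
    ∫ s : ℝ, 1 / (c * s ^ 2 + 1) = Real.pi / √c := by
  rw [one_div_mul_sq_add_one_eq hc.le,
    Measure.integral_comp_mul_left (fun x : ℝ => (1 + x ^ 2)⁻¹) √c,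
    integral_univ_inv_one_add_sq, smul_eq_mul, abs_of_pos (by positivity), inv_mul_eq_div]

theorem sqrt_mul_intervalIntegral_one_div_add (g : ℝ → ℝ) (a δ : ℝ) {ε : ℝ} (hε : 0 < ε) :
    √ε * ∫ r in (a - δ)..(a + δ), 1 / (g r + ε) =
      ∫ s in -(δ / √ε)..δ / √ε, ε / (g (√ε * s + a) + ε) := by
  have hsqrt : 0 < √ε := Real.sqrt_pos.mpr hε
  rw [intervalIntegral.integral_comp_mul_add (fun r => ε / (g r + ε)) hsqrt.ne',
    mul_neg, mul_div_cancel₀ _ hsqrt.ne', neg_add_eq_sub, add_comm δ,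
    smul_eq_mul, ← intervalIntegral.integral_const_mul, ← intervalIntegral.integral_const_mul]
  congr 1 with r
  rw [div_eq_mul_one_div ε, ← mul_assoc, ← div_eq_inv_mul, Real.div_sqrt]

theorem sqrt_mul_add_mem_Icc {a δ ε s : ℝ} (hε : 0 < ε) (hs : s ∈ Ioc (-(δ / √ε)) (δ / √ε)) :
    √ε * s + a ∈ Icc (a - δ) (a + δ) := by
  have hsqrt : 0 < √ε := Real.sqrt_pos.mpr hε
  have h1 := mul_le_mul_of_nonneg_left hs.1.le hsqrt.le
  have h2 := mul_le_mul_of_nonneg_left hs.2 hsqrt.le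
  rw [mul_neg, mul_div_cancel₀ _ hsqrt.ne'] at h1
  rw [mul_div_cancel₀ _ hsqrt.ne'] at h2
  constructor <;> linarith

theorem tendsto_div_sqrt_atTop {δ : ℝ} (hδ : 0 < δ) :
    Tendsto (fun ε => δ / √ε) (𝓝[>] 0) atTop := by
  have hsqrt : Tendsto (fun ε => √ε) (𝓝[>] 0) (𝓝[>] 0) := by
    refine tendsto_nhdsWithin_iff.mpr ⟨?_, ?_⟩
    · simpa using (Real.continuous_sqrt.tendsto 0).mono_left nhdsWithin_le_nhds
    · filter_upwards [self_mem_nhdsWithin] with ε (hε : 0 < ε) using Real.sqrt_pos.mpr hε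
  exact (tendsto_inv_nhdsGT_zero.comp hsqrt).const_mul_atTop hδ

theorem div_add_le_one_div_mul_sq_add_one {G ε k s : ℝ} (hε : 0 < ε) (hk : 0 ≤ k)
    (hG : k * (ε * s ^ 2) ≤ G) : ε / (G + ε) ≤ 1 / (k * s ^ 2 + 1) :=
  calc ε / (G + ε) ≤ ε / (k * (ε * s ^ 2) + ε) := by gcongr
    _ = 1 / (k * s ^ 2 + 1) := by field_simp

theorem tendsto_sqrt_mul_intervalIntegral_one_div_add {g : ℝ → ℝ} {a δ c k : ℝ} (hδ : 0 < δ)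
    (hc : 0 < c) (hk : 0 < k) (hg : ContinuousOn g (Icc (a - δ) (a + δ)))
    (hlow : ∀ r ∈ Icc (a - δ) (a + δ), k * (r - a) ^ 2 ≤ g r)
    (hA : Tendsto (fun x => g x / (x - a) ^ 2) (𝓝[≠] a) (𝓝 c)) :
    Tendsto (fun ε => √ε * ∫ r in (a - δ)..(a + δ), 1 / (g r + ε)) (𝓝[>] 0)
      (𝓝 (Real.pi / √c)) := by
  set F : ℝ → ℝ → ℝ := fun ε =>
    (Ioc (-(δ / √ε)) (δ / √ε)).indicator fun s => ε / (g (√ε * s + a) + ε)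
  have hchange : ∀ ε > 0, √ε * ∫ r in (a - δ)..(a + δ), 1 / (g r + ε) = ∫ s, F ε s := by
    intro ε hε
    have : 0 < δ / √ε := by positivity
    rw [sqrt_mul_intervalIntegral_one_div_add g a δ hε,
      intervalIntegral.integral_of_le (by linarith), integral_indicator measurableSet_Ioc]
  have hnonneg : ∀ r ∈ Icc (a - δ) (a + δ), 0 ≤ g r := fun r hr =>
    (by positivity : 0 ≤ k * (r - a) ^ 2).trans (hlow r hr)
  have hmeas : ∀ ε > 0, AEStronglyMeasurable (F ε) := by
    intro ε hε
    refine (aestronglyMeasurable_indicator_iff measurableSet_Ioc).mpr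
      (ContinuousOn.aestronglyMeasurable ?_ measurableSet_Ioc)
    have hmaps : MapsTo (fun s => √ε * s + a) (Ioc (-(δ / √ε)) (δ / √ε)) (Icc (a - δ) (a + δ)) :=
      fun s hs => sqrt_mul_add_mem_Icc hε hs
    refine continuousOn_const.div ((hg.comp (by fun_prop) hmaps).add continuousOn_const) ?_
    intro s hs
    positivity [hnonneg _ (hmaps hs)]
  have hbound : ∀ ε > 0, ∀ s, ‖F ε s‖ ≤ 1 / (k * s ^ 2 + 1) := by
    intro ε hε s
    by_cases hs : s ∈ Ioc (-(δ / √ε)) (δ / √ε)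
    · have hmem := sqrt_mul_add_mem_Icc (a := a) hε hs
      have hlow' := hlow _ hmem
      rw [add_sub_cancel_right, mul_pow, Real.sq_sqrt hε.le] at hlow'
      rw [show F ε s = _ from indicator_of_mem hs _,
        Real.norm_of_nonneg (by positivity [hnonneg _ hmem])]
      exact div_add_le_one_div_mul_sq_add_one hε hk.le hlow'
    · rw [show F ε s = 0 from indicator_of_notMem hs _, norm_zero]
      positivity
  have hlim : ∀ s ≠ 0, Tendsto (fun ε => F ε s) (𝓝[>] 0) (𝓝 (1 / (c * s ^ 2 + 1))) := by
    intro s hs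
    refine (tendsto_div_apply_sqrt_mul_add hc hA hs).congr' ?_
    filter_upwards [(tendsto_div_sqrt_atTop hδ).eventually_gt_atTop |s|] with ε hε
    have hs' : s ∈ Ioc (-(δ / √ε)) (δ / √ε) :=
      ⟨by linarith [neg_abs_le s], (le_abs_self s).trans hε.le⟩
    simp only [F, indicator_of_mem hs']
  rw [← integral_one_div_mul_sq_add_one hc]
  refine (tendsto_integral_filter_of_dominated_convergence (F := F) _ ?_ ?_
    (integrable_one_div_mul_sq_add_one hk) ?_).congr' ?_
  · filter_upwards [self_mem_nhdsWithin] with ε hε using hmeas ε hε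
  · filter_upwards [self_mem_nhdsWithin] with ε hε using ae_of_all _ (hbound ε hε)
  · filter_upwards [measure_eq_zero_iff_ae_notMem.mp (Real.volume_singleton (a := 0))] with s hs
      using hlim s hs
  · filter_upwards [self_mem_nhdsWithin] with ε hε using (hchange ε hε).symm

theorem stmt_4 (a δ : ℝ) (hδ : 0 < δ) (g₀ : ℝ → ℝ)
    (hg : ContDiffOn ℝ 2 g₀ (Set.Icc (a - δ) (a + δ)))
    (hpos : ∀ r ∈ Set.Icc (a - δ) (a + δ), r ≠ a → 0 < g₀ r)
    (h0 : g₀ a = 0) (h1 : deriv g₀ a = 0) (h2 : 0 < deriv (deriv g₀) a) :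
    Tendsto (fun ε => Real.sqrt ε * ∫ r in (a - δ)..(a + δ), 1 / (g₀ r + ε))
      (𝓝[>] 0) (𝓝 (Real.pi / Real.sqrt (deriv (deriv g₀) a / 2))) := by
  have hg₂ : ContDiffAt ℝ 2 g₀ a := hg.contDiffAt (Icc_mem_nhds (by linarith) (by linarith))
  have hA := tendsto_div_sub_sq_of_deriv_eq_zero
    ((hg₂.eventually (by simp)).mono fun x hx => hx.differentiableAt (by norm_num))
    ((hg₂.derivWithin (m := 1) (by norm_num)).differentiableAt (by norm_num)).hasDerivAt h0 h1
  obtain ⟨k, hk, hlow⟩ :=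
    exists_pos_mul_sub_sq_le isCompact_Icc hg.continuousOn hpos h0.ge (by positivity) hA
  exact tendsto_sqrt_mul_intervalIntegral_one_div_add hδ (by positivity) hk hg.continuousOn hlow hA
end
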